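/- arXiv:1408.2814 — 3 statements merged into one kernel-verified Lean document; each statement's English description precedes it below -/
import Mathlib

section
/- Let p ∈ ℤ and q ∈ ℕ* be relatively prime, γ = 2πp/q. For all (θ₁,θ₂) ∈ ℝ² and all λ ∈ ℂ, det(-λ·I_q + e^{iθ₁} J_{p,q} + e^{iθ₂} K_q) = (-1)^q (λ^q - e^{iqθ₁} - e^{iqθ₂}). -/
/-!
With `a = e^{iθ₁}`, `b = e^{iθ₂}` and `ω = e^{iγ}`, the matrix is `D + b P`, where
`D = diag(a ω^j - λ)` and `P` is the permutation matrix of the `q`-cycle `j ↦ j + 1`.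
In the Leibniz expansion only the identity and this cycle contribute: a permutation moving
every point either nowhere or along a full cycle `c` is `1` or `c`, because the set of points
it moves along `c` is `c`-invariant. Hence `det = ∏ (a ω^j - λ) + sign(c) b^q`. Since
`gcd(p, q) = 1`, `ω` is a primitive `q`-th root of unity, so `∏ (λ - ω^j a) = λ^q - a^q`.
-/

noncomputable section

open Matrix Complex

/-- `J_{p,q}` : the `q × q` diagonal matrix with diagonal entries `e^{i(j-1)γ}`, `j = 1,…,q`,
where `γ = 2πp/q`. -/
def Jmat (p : ℤ) (q : ℕ) : Matrix (Fin q) (Fin q) ℂ :=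
  Matrix.diagonal fun j => Complex.exp (Complex.I * ((j : ℕ) : ℂ) *
    ((2 * Real.pi * (p : ℝ) / (q : ℝ) : ℝ) : ℂ))

/-- `K_q` : the `q × q` cyclic shift matrix, `(K_q)_{jk} = 1` if `k ≡ j+1 [q]`, `0` otherwise. -/
def Kmat (q : ℕ) : Matrix (Fin q) (Fin q) ℂ :=
  Matrix.of fun j k => if ((j : ℕ) + 1) % q = (k : ℕ) then 1 else 0

open Equiv Finset

namespace Equiv.Perm

variable {α : Type*} [Fintype α] [DecidableEq α]

theorem eq_one_or_eq_of_forall_apply_eq_or_eq {c σ : Perm α} (hc : c.IsCycle)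
    (hsupp : c.support = univ) (h : ∀ x, σ x = x ∨ σ x = c x) : σ = 1 ∨ σ = c := by
  have hmove : ∀ x, c x ≠ x := fun x => mem_support.mp (hsupp ▸ mem_univ x)
  by_contra! hne
  obtain ⟨x₀, hx₀⟩ : ∃ x, σ x ≠ x := not_forall.mp fun hfix => hne.1 (Equiv.ext hfix)
  have hstep : ∀ x, σ x = c x → σ (c x) = c (c x) := fun x hx =>
    (h (c x)).resolve_left fun hcx => hmove x (σ.injective (hcx.trans hx.symm))
  have hpow : ∀ k : ℕ, σ ((c ^ k) x₀) = c ((c ^ k) x₀) := by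
    intro k
    induction k with
    | zero => exact (h x₀).resolve_left hx₀
    | succ k ih => rw [pow_succ', mul_apply]; exact hstep _ ih
  refine hne.2 (Equiv.ext fun x => ?_)
  obtain ⟨k, rfl⟩ := (hc.sameCycle (hmove x₀) (hmove x)).exists_nat_pow_eq
  exact hpow k

end Equiv.Perm

namespace Matrix

variable {α R : Type*} [Fintype α] [DecidableEq α] [CommRing R]

theorem det_diagonal_add_smul_permMatrix {σ : Perm α} (hσ : σ.IsCycle)
    (hsupp : σ.support = univ) (d : α → R) (b : R) :
    (diagonal d + b • σ.permMatrix R).det = ∏ i, d i + Perm.sign σ * b ^ Fintype.card α := by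
  set M := diagonal d + b • σ.permMatrix R
  have hM : ∀ i j, M i j = (if i = j then d i else 0) + (if σ i = j then b else 0) := by
    intro i j
    simp [M, diagonal_apply, PEquiv.toMatrix_apply, eq_comm]
  have hfix : ∀ i, σ i ≠ i := fun i => Perm.mem_support.mp (hsupp ▸ mem_univ i)
  have hvanish : ∀ τ : Perm α, τ ≠ 1 ∧ τ ≠ σ → ∏ i, M i (τ i) = 0 := by
    rintro τ ⟨hτ1, hτσ⟩
    by_contra hne
    have hτ : ∀ i, τ i = i ∨ τ i = σ i := by
      intro i
      by_contra! hi
      exact hne (prod_eq_zero (mem_univ i) (by simp [hM, Ne.symm hi.1, Ne.symm hi.2]))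
    exact (Perm.eq_one_or_eq_of_forall_apply_eq_or_eq hσ hsupp hτ).elim hτ1 hτσ
  rw [← det_transpose, det_apply', Fintype.sum_eq_add 1 σ hσ.ne_one.symm
    (fun τ hτ => by simp [hvanish τ hτ])]
  simp [hM, hfix, fun i => Ne.symm (hfix i)]

theorem det_diagonal_add_smul_permMatrix_finRotate {q : ℕ} (hq : 0 < q)
    (d : Fin q → R) (b : R) :
    (diagonal d + b • (finRotate q).permMatrix R).det = ∏ i, d i - (-1) ^ q * b ^ q := by
  obtain ⟨n, rfl⟩ | ⟨n, rfl⟩ : q = 1 ∨ ∃ n, q = n + 2 := by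
    rcases q with _ | _ | n <;> simp_all
  · simp [finRotate_one]
  · rw [det_diagonal_add_smul_permMatrix isCycle_finRotate support_finRotate, sign_finRotate,
      Fintype.card_fin]
    push_cast
    ring

end Matrix

theorem IsPrimitiveRoot.prod_mul_pow_sub {R : Type*} [CommRing R] [IsDomain R] {ζ : R}
    {n : ℕ} (hζ : IsPrimitiveRoot ζ n) (hn : 0 < n) (a x : R) :
    ∏ j : Fin n, (a * ζ ^ (j : ℕ) - x) = (-1) ^ n * (x ^ n - a ^ n) :=
  calc ∏ j : Fin n, (a * ζ ^ (j : ℕ) - x) = ∏ j ∈ range n, -(x - ζ ^ j * a) := by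
        rw [Fin.prod_univ_eq_prod_range (fun j => a * ζ ^ j - x)]
        exact prod_congr rfl fun j _ => by ring
    _ = (-1) ^ n * (x ^ n - a ^ n) := by
        rw [prod_neg, card_range]
        simpa [Polynomial.eval_prod] using
          (congrArg (Polynomial.eval x) (X_pow_sub_C_eq_prod hζ hn (rfl : a ^ n = _))).symm

theorem Kmat_eq_permMatrix_finRotate (q : ℕ) : Kmat q = (finRotate q).permMatrix ℂ := by
  ext j k
  rcases q with _ | q
  · exact j.elim0
  · simp [Kmat, finRotate_apply, Fin.ext_iff, Fin.val_add]

theorem Jmat_eq_diagonal_pow (p : ℤ) (q : ℕ) :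
    Jmat p q = diagonal fun j : Fin q => cexp (2 * Real.pi * I * (p / q)) ^ (j : ℕ) := by
  unfold Jmat
  congr 1
  ext j
  rw [← Complex.exp_nat_mul]
  push_cast
  ring_nf

theorem stmt_6 (p : ℤ) (q : ℕ) (hq : 0 < q) (hpq : Int.gcd p (q : ℤ) = 1)
    (θ₁ θ₂ : ℝ) (l : ℂ) :
    Matrix.det (-(l • (1 : Matrix (Fin q) (Fin q) ℂ))
        + Complex.exp (Complex.I * (θ₁ : ℂ)) • Jmat p q
        + Complex.exp (Complex.I * (θ₂ : ℂ)) • Kmat q) =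
      (-1 : ℂ) ^ q * (l ^ q - Complex.exp (Complex.I * (q : ℂ) * (θ₁ : ℂ))
        - Complex.exp (Complex.I * (q : ℂ) * (θ₂ : ℂ))) := by
  set ω := cexp (2 * Real.pi * I * (p / q))
  have hω : IsPrimitiveRoot ω q :=
    isPrimitiveRoot_exp_of_isCoprime p q hq.ne' (Int.isCoprime_iff_gcd_eq_one.mpr hpq)
  have hexp_pow : ∀ θ : ℝ, cexp (I * q * θ) = cexp (I * θ) ^ q := fun θ => by
    rw [← Complex.exp_nat_mul]
    ring_nf
  set a := cexp (I * θ₁)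
  set b := cexp (I * θ₂)
  have hmat : -(l • (1 : Matrix (Fin q) (Fin q) ℂ)) + a • Jmat p q + b • Kmat q
      = diagonal (fun j : Fin q => a * ω ^ (j : ℕ) - l) + b • (finRotate q).permMatrix ℂ := by
    rw [Jmat_eq_diagonal_pow, Kmat_eq_permMatrix_finRotate, smul_one_eq_diagonal, diagonal_neg,
      ← diagonal_smul, diagonal_add]
    congr 2
    ext j
    simp only [Pi.smul_apply, smul_eq_mul]
    ring
  rw [hmat, det_diagonal_add_smul_permMatrix_finRotate hq, hω.prod_mul_pow_sub hq, hexp_pow,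
    hexp_pow]
  ring
end
end

section
/- Let p ∈ ℤ and q ∈ ℕ* be relatively prime, γ = 2πp/q, and let M_G(θ₁,θ₂) be the 2q×2q graphene matrix. Then there exists (θ₁,θ₂) ∈ ℝ² such that det(M_G(θ₁,θ₂)) = 0, i.e. 0 belongs to the spectrum of the graphene model. -/
noncomputable section

open Matrix Complex

/-- `A(θ₁,θ₂) = I_q + e^{iθ₁} J_{p,q} + e^{iθ₂} K_q`. -/
def Agr (p : ℤ) (q : ℕ) (θ₁ θ₂ : ℝ) : Matrix (Fin q) (Fin q) ℂ :=
  1 + Complex.exp (Complex.I * (θ₁ : ℂ)) • Jmat p q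
    + Complex.exp (Complex.I * (θ₂ : ℂ)) • Kmat q

/-- The graphene matrix `M_G(θ₁,θ₂)` : the `2q × 2q` block matrix `[[0, A],[A*, 0]]`. -/
def MG (p : ℤ) (q : ℕ) (θ₁ θ₂ : ℝ) : Matrix (Fin q ⊕ Fin q) (Fin q ⊕ Fin q) ℂ :=
  Matrix.fromBlocks 0 (Agr p q θ₁ θ₂) (Agr p q θ₁ θ₂)ᴴ 0


/-!
Write `x = e^{iθ₁}`, `y = e^{iθ₂}` and `ζ = e^{iγ}`. The block `A` of `M_G` is
`diag(1 + x ζʲ) + y K_q`, a diagonal matrix plus a multiple of the cyclic shift. Such a matrix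
is singular as soon as `∏ⱼ (1 + x ζʲ) = (-y)^q`: the vector `vⱼ = (-y)⁻ʲ ∏_{k<j} (1 + x ζᵏ)`
solves every row, the last one thanks to this product condition. Since `ζ` is a primitive
`q`-th root of unity, the product is `1 - (-x)^q`, and the condition `1 - (-x)^q = (-y)^q` holds
for `θ₁ = π + π/(3q)`, `θ₂ = π - π/(3q)` because `1 - e^{iπ/3} = e^{-iπ/3}`.
A null vector of `A` then gives one of `M_G`.
-/

open Finset

theorem IsPrimitiveRoot.prod_range_one_add_mul_pow {R : Type*} [CommRing R] [IsDomain R]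
    {ζ : R} {n : ℕ} (hζ : IsPrimitiveRoot ζ n) (hn : 0 < n) (x : R) :
    ∏ i ∈ range n, (1 + x * ζ ^ i) = 1 - (-x) ^ n := by
  have h := congrArg (Polynomial.eval 1) (X_pow_sub_C_eq_prod hζ hn (α := -x) rfl)
  simp only [Polynomial.eval_sub, Polynomial.eval_pow, Polynomial.eval_X, Polynomial.eval_C,
    Polynomial.eval_prod, one_pow] at h
  rw [h]
  exact prod_congr rfl fun i _ => by ring

theorem Matrix.det_fromBlocks_zero_zero_of_det_eq_zero {n K : Type*} [Fintype n] [DecidableEq n]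
    [Field K] {A B : Matrix n n K} (hA : A.det = 0) : (fromBlocks 0 A B 0).det = 0 := by
  obtain ⟨v, hv, hAv⟩ := exists_mulVec_eq_zero_iff.mpr hA
  refine exists_mulVec_eq_zero_iff.mp ⟨Sum.elim 0 v, fun h => hv ?_, ?_⟩
  · simpa using congrArg (fun u => u ∘ Sum.inr) h
  · simp [fromBlocks_mulVec, hAv]

theorem exp_mul_I_pi_add (t : ℝ) : exp (I * ((Real.pi + t : ℝ) : ℂ)) = -exp (t * I) := by
  rw [ofReal_add, mul_add, exp_add, mul_comm I, exp_pi_mul_I, mul_comm I, neg_one_mul]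

theorem one_sub_exp_pi_div_three_mul_I :
    1 - exp ((Real.pi / 3 : ℝ) * I) = exp ((-(Real.pi / 3) : ℝ) * I) := by
  rw [exp_mul_I, exp_mul_I, ← ofReal_cos, ← ofReal_sin, ← ofReal_cos, ← ofReal_sin,
    Real.cos_neg, Real.sin_neg, Real.cos_pi_div_three, Real.sin_pi_div_three]
  push_cast
  ring

theorem Kmat_mulVec_apply {q : ℕ} (w : ℕ → ℂ) (j : Fin q) :
    (Kmat q *ᵥ fun k : Fin q => w k) j = w ((j + 1) % q) := by
  have hj : ((j : ℕ) + 1) % q < q := Nat.mod_lt _ j.pos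
  simp only [mulVec, dotProduct, Kmat, of_apply, ite_mul, one_mul, zero_mul]
  rw [Finset.sum_eq_single ⟨_, hj⟩]
  · simp
  · intro k _ hk
    rw [if_neg fun h => hk (Fin.ext h.symm)]
  · simp

theorem det_diagonal_add_smul_Kmat_eq_zero {q : ℕ} (hq : 0 < q) (d : ℕ → ℂ) {y : ℂ}
    (hy : y ≠ 0) (hprod : ∏ k ∈ range q, d k = (-y) ^ q) :
    (diagonal (fun j : Fin q => d j) + y • Kmat q).det = 0 := by
  set w : ℕ → ℂ := fun n => ((-y) ^ n)⁻¹ * ∏ k ∈ range n, d k with hw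
  have hrec (n : ℕ) : d n * w n + y * w (n + 1) = 0 := by
    simp only [hw, prod_range_succ, pow_succ]
    field_simp
    ring
  have hw0 : w 0 = 1 := by simp [hw]
  have hwrap (j : Fin q) : w ((j + 1) % q) = w (j + 1) := by
    rcases (show (j : ℕ) + 1 ≤ q from j.isLt).lt_or_eq with h | h
    · rw [Nat.mod_eq_of_lt h]
    · rw [h, Nat.mod_self, hw0]
      show 1 = ((-y) ^ q)⁻¹ * ∏ k ∈ range q, d k
      rw [hprod, inv_mul_cancel₀ (pow_ne_zero q (neg_ne_zero.mpr hy))]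
  rw [← exists_mulVec_eq_zero_iff]
  refine ⟨fun j => w j, fun h => ?_, ?_⟩
  · simpa [hw0] using congrFun h ⟨0, hq⟩
  · funext j
    simp [add_mulVec, smul_mulVec, mulVec_diagonal, Kmat_mulVec_apply, hwrap, hrec]

def phase (p : ℤ) (q : ℕ) : ℂ :=
  exp (I * ((2 * Real.pi * (p : ℝ) / (q : ℝ) : ℝ) : ℂ))

theorem isPrimitiveRoot_phase {p : ℤ} {q : ℕ} (hq : 0 < q) (hpq : Int.gcd p (q : ℤ) = 1) :
    IsPrimitiveRoot (phase p q) q := by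
  have h := (isPrimitiveRoot_exp q hq.ne').zpow_of_gcd_eq_one p hpq
  rw [← exp_int_mul] at h
  rwa [phase, show I * ((2 * Real.pi * (p : ℝ) / (q : ℝ) : ℝ) : ℂ) = p * (2 * Real.pi * I / q) by
    push_cast; ring]

theorem Jmat_eq_diagonal_phase_pow (p : ℤ) (q : ℕ) :
    Jmat p q = diagonal fun j : Fin q => phase p q ^ (j : ℕ) := by
  simp only [Jmat, phase, ← exp_nat_mul, mul_left_comm _ I, mul_assoc]

theorem Agr_eq_diagonal_add_smul_Kmat (p : ℤ) (q : ℕ) (θ₁ θ₂ : ℝ) :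
    Agr p q θ₁ θ₂ = diagonal (fun j : Fin q => 1 + exp (I * θ₁) * phase p q ^ (j : ℕ)) +
      exp (I * θ₂) • Kmat q := by
  rw [Agr, Jmat_eq_diagonal_phase_pow, ← diagonal_one, ← diagonal_smul, ← diagonal_add]
  rfl

theorem stmt_8 (p : ℤ) (q : ℕ) (hq : 0 < q) (hpq : Int.gcd p (q : ℤ) = 1) :
    ∃ θ₁ θ₂ : ℝ, Matrix.det (MG p q θ₁ θ₂) = 0 := by
  set t : ℝ := Real.pi / (3 * q)
  have hqt : (q : ℂ) * t = (Real.pi / 3 : ℝ) := by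
    have hq' : (q : ℂ) ≠ 0 := by exact_mod_cast hq.ne'
    simp only [t]
    push_cast
    field_simp
  refine ⟨Real.pi + t, Real.pi + -t, det_fromBlocks_zero_zero_of_det_eq_zero ?_⟩
  rw [Agr_eq_diagonal_add_smul_Kmat]
  refine det_diagonal_add_smul_Kmat_eq_zero hq (fun n => 1 + _ * _ ^ n) (exp_ne_zero _) ?_
  rw [(isPrimitiveRoot_phase hq hpq).prod_range_one_add_mul_pow hq,
    exp_mul_I_pi_add, exp_mul_I_pi_add, neg_neg, neg_neg, ← exp_nat_mul, ← exp_nat_mul,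
    ← mul_assoc, ← mul_assoc, ofReal_neg, mul_neg, hqt, ← ofReal_neg]
  exact one_sub_exp_pi_div_three_mul_I
end
end

section
/- Let f and g be polynomials with real coefficients of degrees q and r respectively with r < q, having no common zero, and let I = (a,b) be a nonempty open interval such that for every μ ∈ I all complex roots of the polynomial f - μg are real. Then for every real λ with g(λ) ≠ 0 and f(λ)/g(λ) ∈ I, one has f'(λ)g(λ) - f(λ)g'(λ) ≠ 0. -/
/-!
Suppose `W = f'g - fg'` vanishes at `l`, and put `μ = f(l)/g(l)`. For small `t ≠ 0` the polynomial
`p = f - (μ + t) g` has the same degree and leading coefficient as `f`, only real roots, and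
`p(l) = -t g(l)`, `p'(l) = -t g'(l)`. For a real-rooted `p` with `p(l) ≠ 0`,
`p'(l)² - p(l) p''(l) = p(l)² ∑ 1/(l - s)²` over its roots `s`; since `|p(l)|` is tiny, some root is
very close to `l`, so this quantity is much larger than `p(l)² = t² g(l)²`. On the other hand it
equals `t² (g'² - g g'')(l) + t g(l) (f'' - μ g'')(l)`, and choosing the sign of `t` to make the
linear term nonpositive bounds it by a fixed multiple of `t²`: a contradiction.
-/

open Polynomial Filter Topology

namespace Polynomial

section Field

variable {K : Type*} [Field K]

theorem eval_derivative_sq_sub_multiset_prod_X_sub_C (R : Multiset K) {x : K}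
    (hx : ∀ s ∈ R, x ≠ s) :
    eval x (derivative (R.map (X - C ·)).prod) ^ 2
        - eval x (R.map (X - C ·)).prod * eval x (derivative (derivative (R.map (X - C ·)).prod))
      = eval x (R.map (X - C ·)).prod ^ 2 * (R.map fun s => ((x - s) ^ 2)⁻¹).sum := by
  induction R using Multiset.induction with
  | empty => simp
  | cons a R ih =>
    have ha : (x - a) ^ 2 * ((x - a) ^ 2)⁻¹ = 1 :=
      mul_inv_cancel₀ (pow_ne_zero 2 (sub_ne_zero.mpr (hx a (Multiset.mem_cons_self a R))))
    have ihR := ih fun s hs => hx s (Multiset.mem_cons_of_mem hs)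
    simp only [Multiset.map_cons, Multiset.prod_cons, Multiset.sum_cons, derivative_mul,
      derivative_add, derivative_sub, derivative_X, derivative_C, sub_zero, one_mul, eval_mul,
      eval_add, eval_sub, eval_X, eval_C] at ihR ⊢
    linear_combination (x - a) ^ 2 * ihR - eval x (R.map (X - C ·)).prod ^ 2 * ha

theorem Splits.eval_derivative_sq_sub {p : K[X]} (hp : p.Splits) {x : K} (hx : p.eval x ≠ 0) :
    eval x (derivative p) ^ 2 - eval x p * eval x (derivative (derivative p))
      = eval x p ^ 2 * (p.roots.map fun s => ((x - s) ^ 2)⁻¹).sum := by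
  have key := eval_derivative_sq_sub_multiset_prod_X_sub_C (x := x) p.roots
    fun s hs h => hx (by rw [h]; exact isRoot_of_mem_roots hs)
  have hfactor := hp.eq_prod_roots
  set S := (p.roots.map fun s => ((x - s) ^ 2)⁻¹).sum
  rw [hfactor]
  simp only [derivative_mul, derivative_C, zero_mul, zero_add, eval_mul, eval_C]
  linear_combination p.leadingCoeff ^ 2 * key

variable {f g : K[X]} {x μ : K}

theorem eval_sub_C_add_mul_of_eval_eq_mul (hf : f.eval x = μ * g.eval x) (t : K) :
    (f - C (μ + t) * g).eval x = -(t * g.eval x) := by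
  simp only [eval_sub, eval_mul, eval_C, hf]
  ring

theorem eval_derivative_sq_sub_sub_C_add_mul_of_eval_eq_mul (hf : f.eval x = μ * g.eval x)
    (hf' : (derivative f).eval x = μ * (derivative g).eval x) (t : K) :
    eval x (derivative (f - C (μ + t) * g)) ^ 2
        - eval x (f - C (μ + t) * g) * eval x (derivative (derivative (f - C (μ + t) * g)))
      = t ^ 2 * ((derivative g).eval x ^ 2 - g.eval x * (derivative (derivative g)).eval x)
        + t * g.eval x * ((derivative (derivative f)).eval x
          - μ * (derivative (derivative g)).eval x) := by
  simp only [derivative_sub, derivative_mul, derivative_C, zero_mul, zero_add, eval_sub,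
    eval_mul, eval_C, hf, hf']
  ring

end Field

section LinearOrderedField

variable {K : Type*} [Field K] [LinearOrder K] [IsStrictOrderedRing K]

theorem Splits.exists_mem_roots_sq_sub_lt {p : K[X]} (hp : p.Splits) {x c : K} (hc : 0 ≤ c)
    (hsmall : p.eval x ^ 2 < p.leadingCoeff ^ 2 * c ^ p.natDegree) :
    ∃ s ∈ p.roots, (x - s) ^ 2 < c := by
  by_contra! hfar
  have hprod : c ^ p.natDegree ≤ (p.roots.map fun s => (x - s) ^ 2).prod := by
    have := Multiset.prod_map_le_prod_map₀ (fun _ => c) _ (fun _ _ => hc) hfar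
    rwa [Multiset.map_const', Multiset.prod_replicate, ← hp.natDegree_eq_card_roots] at this
  have heval : p.eval x ^ 2 = p.leadingCoeff ^ 2 * (p.roots.map fun s => (x - s) ^ 2).prod := by
    rw [hp.eval_eq_prod_roots, mul_pow, Multiset.prod_map_pow]
  exact hsmall.not_ge (heval ▸ mul_le_mul_of_nonneg_left hprod (sq_nonneg _))

theorem Splits.sq_eval_div_lt_eval_derivative_sq_sub {p : K[X]} (hp : p.Splits) {x c : K}
    (hx : p.eval x ≠ 0) (hc : 0 < c)
    (hsmall : p.eval x ^ 2 < p.leadingCoeff ^ 2 * c ^ p.natDegree) :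
    p.eval x ^ 2 / c
      < eval x (derivative p) ^ 2 - eval x p * eval x (derivative (derivative p)) := by
  obtain ⟨s, hs, hclose⟩ := hp.exists_mem_roots_sq_sub_lt hc.le hsmall
  have hxs : 0 < (x - s) ^ 2 := pow_two_pos_of_ne_zero <|
    sub_ne_zero.mpr fun h => hx (by rw [h]; exact isRoot_of_mem_roots hs)
  rw [hp.eval_derivative_sq_sub hx, div_eq_mul_inv]
  refine mul_lt_mul_of_pos_left ?_ (by positivity)
  calc c⁻¹ < ((x - s) ^ 2)⁻¹ := inv_strictAnti₀ hxs hclose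
    _ ≤ (p.roots.map fun s => ((x - s) ^ 2)⁻¹).sum :=
      Multiset.single_le_sum (fun _ h => by obtain ⟨_, _, rfl⟩ := Multiset.mem_map.mp h; positivity)
        _ (Multiset.mem_map_of_mem _ hs)

end LinearOrderedField

theorem natDegree_sub_C_mul_of_natDegree_lt {R : Type*} [Ring R] {f g : R[X]}
    (h : g.natDegree < f.natDegree) (μ : R) : (f - C μ * g).natDegree = f.natDegree :=
  natDegree_sub_eq_left_of_natDegree_lt ((natDegree_C_mul_le μ g).trans_lt h)

theorem leadingCoeff_sub_C_mul_of_natDegree_lt {R : Type*} [Ring R] {f g : R[X]}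
    (h : g.natDegree < f.natDegree) (μ : R) : (f - C μ * g).leadingCoeff = f.leadingCoeff :=
  leadingCoeff_sub_of_degree_lt (degree_lt_degree ((natDegree_C_mul_le μ g).trans_lt h))

theorem splits_of_forall_aeval_eq_zero_im_eq_zero {p : ℝ[X]}
    (h : ∀ z : ℂ, aeval z p = 0 → z.im = 0) : p.Splits :=
  Splits.of_splits_map (algebraMap ℝ ℂ) (IsAlgClosed.splits _) fun z hz => ⟨z.re, by
    have hz : z.im = 0 := h z (by rw [aeval_def, eval₂_eq_eval_map]; exact (mem_roots'.mp hz).2)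
    exact Complex.ext (by simp) (by simp [hz])⟩

end Polynomial

theorem Real.exists_ne_zero_mul_nonpos_of_eventually {P : ℝ → Prop} (hP : ∀ᶠ t in 𝓝 0, P t)
    (k : ℝ) : ∃ t, t ≠ 0 ∧ t * k ≤ 0 ∧ P t := by
  rcases le_or_gt 0 k with hk | hk
  · obtain ⟨t, hPt, ht⟩ :=
      ((hP.filter_mono (nhdsWithin_le_nhds (s := Set.Iio 0))).and self_mem_nhdsWithin).exists
    exact ⟨t, ht.ne, mul_nonpos_of_nonpos_of_nonneg (le_of_lt ht) hk, hPt⟩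
  · obtain ⟨t, hPt, ht⟩ :=
      ((hP.filter_mono (nhdsWithin_le_nhds (s := Set.Ioi 0))).and self_mem_nhdsWithin).exists
    exact ⟨t, ht.ne', mul_nonpos_of_nonneg_of_nonpos ht.le hk.le, hPt⟩

theorem stmt_18_general (f g : Polynomial ℝ) (q r : ℕ)
    (hdegf : f.natDegree = q) (hdegg : g.natDegree = r) (hrq : r < q)
    (a b : ℝ)
    (hreal : ∀ μ ∈ Set.Ioo a b, ∀ z : ℂ,
      Polynomial.aeval z f = (μ : ℂ) * Polynomial.aeval z g → z.im = 0) :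
    ∀ l : ℝ, g.eval l ≠ 0 → f.eval l / g.eval l ∈ Set.Ioo a b →
      f.derivative.eval l * g.eval l - f.eval l * g.derivative.eval l ≠ 0 := by
  intro l hgl hμ hW
  set μ := f.eval l / g.eval l
  have hf : f.eval l = μ * g.eval l := (div_mul_cancel₀ _ hgl).symm
  have hf' : f.derivative.eval l = μ * g.derivative.eval l :=
    mul_right_cancel₀ hgl (by linear_combination hW + g.derivative.eval l * hf)
  have hdeg : g.natDegree < f.natDegree := hdegf ▸ hdegg ▸ hrq
  have hL : f.leadingCoeff ≠ 0 := leadingCoeff_ne_zero.mpr (ne_zero_of_natDegree_gt hdeg)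
  set A := g.derivative.eval l ^ 2 - g.eval l * g.derivative.derivative.eval l
  set c := g.eval l ^ 2 / (|A| + 1)
  have hc : 0 < c := by positivity
  have hnear : ∀ᶠ t in 𝓝 0, μ + t ∈ Set.Ioo a b ∧
      (t * g.eval l) ^ 2 < f.leadingCoeff ^ 2 * c ^ f.natDegree := by
    refine (Tendsto.eventually ?_ (Ioo_mem_nhds hμ.1 hμ.2)).and
      (Tendsto.eventually ?_ (gt_mem_nhds (by positivity)))
    · simpa using tendsto_const_nhds.add (tendsto_id (x := 𝓝 (0 : ℝ)))
    · simpa using ((tendsto_id (x := 𝓝 (0 : ℝ))).mul_const (g.eval l)).pow 2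
  obtain ⟨t, ht, hsign, hμt, hsmall⟩ := Real.exists_ne_zero_mul_nonpos_of_eventually hnear
    (g.eval l * (f.derivative.derivative.eval l - μ * g.derivative.derivative.eval l))
  have hsplit : (f - C (μ + t) * g).Splits := splits_of_forall_aeval_eq_zero_im_eq_zero
    fun z hz => hreal _ hμt z (by simpa [sub_eq_zero] using hz)
  have hlaguerre := hsplit.sq_eval_div_lt_eval_derivative_sq_sub (x := l)
    (by rw [eval_sub_C_add_mul_of_eval_eq_mul hf]; exact neg_ne_zero.mpr (mul_ne_zero ht hgl)) hc
    (by rwa [eval_sub_C_add_mul_of_eval_eq_mul hf, natDegree_sub_C_mul_of_natDegree_lt hdeg,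
      leadingCoeff_sub_C_mul_of_natDegree_lt hdeg, neg_sq])
  rw [eval_derivative_sq_sub_sub_C_add_mul_of_eval_eq_mul hf hf',
    eval_sub_C_add_mul_of_eval_eq_mul hf] at hlaguerre
  have hlhs : (-(t * g.eval l)) ^ 2 / c = t ^ 2 * (|A| + 1) := by
    simp only [c]
    field_simp
  nlinarith [le_abs_self A, pow_two_pos_of_ne_zero ht]

theorem stmt_18 (f g : Polynomial ℝ) (q r : ℕ) (hq : 1 ≤ q)
    (hdegf : f.natDegree = q) (hdegg : g.natDegree = r) (hrq : r < q)
    (hcoprime : ∀ z : ℂ, ¬ (Polynomial.aeval z f = 0 ∧ Polynomial.aeval z g = 0))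
    (a b : ℝ) (hab : a < b)
    (hreal : ∀ μ ∈ Set.Ioo a b, ∀ z : ℂ,
      Polynomial.aeval z f = (μ : ℂ) * Polynomial.aeval z g → z.im = 0) :
    ∀ l : ℝ, g.eval l ≠ 0 → f.eval l / g.eval l ∈ Set.Ioo a b →
      f.derivative.eval l * g.eval l - f.eval l * g.derivative.eval l ≠ 0 :=
  stmt_18_general f g q r hdegf hdegg hrq a b hreal
end
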